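/- arXiv:2402.12980 — 2 statements merged into one kernel-verified Lean document; each statement's English description precedes it below -/
import Mathlib

section
/- Let Z₁ ⊆ Z₂ be sub-σ-algebras, T a discrete random variable, Y a square-integrable real random variable, and suppose Y is conditionally independent of Z₂ given σ(T) ∨ Z₁. Then for each value t of T, b_t(Z₁) = b_t(Z₂) almost surely, where b_t(Z) := E[Y·1{T=t} | Z] / P(T = t | Z). Consequently E[b_t(Z₁)] = E[b_t(Z₂)]. -/
open MeasureTheory Set
open scoped NNReal ENNReal

/-- Tower trick: `∫ g·f = ∫ g·E[f|m]` for `g` strongly measurable w.r.t. `m`. -/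
lemma int_mul_condexp {Ω : Type*} {m m0 : MeasurableSpace Ω} (hm : m ≤ m0)
    (μ : Measure Ω) [IsFiniteMeasure μ] {g f : Ω → ℝ}
    (hg : StronglyMeasurable[m] g) (hf : Integrable f μ)
    (hgf : Integrable (fun ω => g ω * f ω) μ) :
    ∫ ω, g ω * f ω ∂μ = ∫ ω, g ω * (μ[f|m]) ω ∂μ := by
  have h := condExp_mul_of_stronglyMeasurable_left hg (show Integrable (g * f) μ from hgf) hf
  calc ∫ ω, g ω * f ω ∂μ = ∫ ω, (μ[g * f|m]) ω ∂μ :=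
        (integral_condExp hm (f := fun ω => g ω * f ω)).symm
    _ = ∫ ω, g ω * (μ[f|m]) ω ∂μ := integral_congr_ae h

lemma abs_mul_le_one' {a b : ℝ} (ha : |a| ≤ 1) (hb : |b| ≤ 1) : |a * b| ≤ 1 := by
  rw [abs_mul]; nlinarith [abs_nonneg a, abs_nonneg b]

/-- bounded (a.e. by 1) times integrable is integrable -/
lemma bdd_mul_integrable {Ω : Type*} [m0 : MeasurableSpace Ω] {μ : Measure Ω}
    {b f : Ω → ℝ} (hb : AEStronglyMeasurable b μ) (hb1 : ∀ᵐ ω ∂μ, |b ω| ≤ 1)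
    (hf : Integrable f μ) : Integrable (fun ω => b ω * f ω) μ := by
  refine hf.mono (hb.mul hf.1) ?_
  filter_upwards [hb1] with ω h1
  rw [Real.norm_eq_abs, Real.norm_eq_abs, abs_mul]
  exact mul_le_of_le_one_left (abs_nonneg _) h1

lemma bdd_mul_integrable' {Ω : Type*} [m0 : MeasurableSpace Ω] {μ : Measure Ω}
    {b f : Ω → ℝ} (hb : AEStronglyMeasurable b μ) (hb1 : ∀ᵐ ω ∂μ, |b ω| ≤ 1)
    (hf : Integrable f μ) : Integrable (fun ω => f ω * b ω) μ :=
  (bdd_mul_integrable hb hb1 hf).congr (Filter.Eventually.of_forall fun ω => mul_comm _ _)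

/-- condexp of a 0-1 indicator is a.e. in [0,1] -/
lemma condexp_indicator_mem01 {Ω : Type*} (m : MeasurableSpace Ω) [m0 : MeasurableSpace Ω]
    (hm : m ≤ m0) (μ : Measure Ω) [IsProbabilityMeasure μ] {S : Set Ω}
    (hS : MeasurableSet S) :
    ∀ᵐ ω ∂μ, 0 ≤ (μ[S.indicator (fun _ => (1:ℝ))|m]) ω ∧
      (μ[S.indicator (fun _ => (1:ℝ))|m]) ω ≤ 1 := by
  have h0 : ∀ᵐ ω ∂μ, 0 ≤ (μ[S.indicator (fun _ => (1:ℝ))|m]) ω :=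
    condExp_nonneg (Filter.Eventually.of_forall fun ω => Set.indicator_nonneg (by norm_num) ω)
  have h1 : (μ[S.indicator (fun _ => (1:ℝ))|m]) ≤ᵐ[μ] μ[(fun _ => (1:ℝ))|m] := by
    refine condExp_mono ((integrable_const 1).indicator hS) (integrable_const 1) ?_
    refine Filter.Eventually.of_forall fun ω => ?_
    by_cases h : ω ∈ S <;> simp [Set.indicator_apply, h]
  rw [condExp_const hm (1:ℝ)] at h1
  filter_upwards [h0, h1] with ω hw0 hw1
  exact ⟨hw0, hw1⟩

/-- Step A: if conditional CDFs agree, conditional means agree on G₂-sets. -/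
lemma lemSA {Ω : Type*} (G₁ G₂ : MeasurableSpace Ω) [m0 : MeasurableSpace Ω]
    (hG₁0 : G₁ ≤ m0) (hG₂0 : G₂ ≤ m0)
    (μ : Measure Ω) [IsProbabilityMeasure μ]
    {Y' : Ω → ℝ} (hY'sm : StronglyMeasurable Y') (hY'int : Integrable Y' μ)
    (hci : ∀ y : ℝ, (μ[(Y' ⁻¹' Set.Iic y).indicator (fun _ => (1:ℝ))|G₂])
      =ᵐ[μ] (μ[(Y' ⁻¹' Set.Iic y).indicator (fun _ => (1:ℝ))|G₁]))
    {C : Set Ω} (hC : MeasurableSet[G₂] C) :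
    ∫ ω in C, Y' ω ∂μ = ∫ ω in C, (μ[Y'|G₁]) ω ∂μ := by
  have hY'meas : Measurable Y' := hY'sm.measurable
  have hC0 : MeasurableSet C := hG₂0 _ hC
  set χC := C.indicator (fun _ => (1:ℝ)) with hχCdef
  have hχC_sm : StronglyMeasurable χC := stronglyMeasurable_const.indicator hC0
  have hχCint : Integrable χC μ := (integrable_const 1).indicator hC0
  have hχC01 : ∀ ω, |χC ω| ≤ 1 := by
    intro ω; rw [hχCdef]; unfold Set.indicator; split <;> norm_num
  set q := μ[χC|G₁] with hqdef
  have hq_sm : StronglyMeasurable[G₁] q := stronglyMeasurable_condExp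
  have hq_sm0 : StronglyMeasurable q := hq_sm.mono hG₁0
  have hq01 : ∀ᵐ ω ∂μ, 0 ≤ q ω ∧ q ω ≤ 1 := condexp_indicator_mem01 G₁ hG₁0 μ hC0
  have hq_abs : ∀ᵐ ω ∂μ, |q ω| ≤ 1 := by
    filter_upwards [hq01] with ω h
    exact abs_le.2 ⟨by linarith [h.1], h.2⟩
  -- the density measure
  set w : Ω → ℝ≥0 := fun ω => Real.toNNReal (q ω) with hwdef
  have hw_meas : Measurable w := hq_sm0.measurable.real_toNNReal
  set ν := μ.withDensity (fun ω => (w ω : ℝ≥0∞)) with hνdef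
  have hν_fin : IsFiniteMeasure ν := by
    constructor
    rw [hνdef, withDensity_apply _ MeasurableSet.univ, Measure.restrict_univ]
    have hle : ∫⁻ ω, (w ω : ℝ≥0∞) ∂μ ≤ ∫⁻ _, 1 ∂μ := by
      refine lintegral_mono_ae ?_
      filter_upwards [hq01] with ω h
      simp only [hwdef]
      rw [show ((Real.toNNReal (q ω) : ℝ≥0) : ℝ≥0∞) = ENNReal.ofReal (q ω) from rfl]
      exact ENNReal.ofReal_le_one.2 h.2
    refine lt_of_le_of_lt hle ?_
    simp [measure_lt_top μ Set.univ]
  haveI := hν_fin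
  -- the Iic-identity
  have hIic : ∀ y : ℝ, (∫ ω in C, (Y' ⁻¹' Set.Iic y).indicator (fun _ => (1:ℝ)) ω ∂μ)
      = ∫ ω in Y' ⁻¹' Set.Iic y, q ω ∂μ := by
    intro y
    set S := Y' ⁻¹' Set.Iic y with hSdef
    have hS0 : MeasurableSet S := hY'meas measurableSet_Iic
    set χS := S.indicator (fun _ => (1:ℝ)) with hχSdef
    have hχS_sm : StronglyMeasurable χS := stronglyMeasurable_const.indicator hS0
    have hχSint : Integrable χS μ := (integrable_const 1).indicator hS0
    have hχS01 : ∀ ω, |χS ω| ≤ 1 := by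
      intro ω; rw [hχSdef]; unfold Set.indicator; split <;> norm_num
    have hci' : μ[χS|G₂] =ᵐ[μ] μ[χS|G₁] := hci y
    set g := μ[χS|G₁] with hgdef
    have hg_sm : StronglyMeasurable[G₁] g := stronglyMeasurable_condExp
    have hg_int : Integrable g μ := integrable_condExp
    calc ∫ ω in C, χS ω ∂μ
        = ∫ ω in C, (μ[χS|G₂]) ω ∂μ := (setIntegral_condExp hG₂0 hχSint hC).symm
      _ = ∫ ω in C, g ω ∂μ := integral_congr_ae (ae_restrict_of_ae hci')
      _ = ∫ ω, χC ω * g ω ∂μ := by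
          rw [← integral_indicator hC0]
          congr 1; funext ω
          by_cases h : ω ∈ C
          · rw [Set.indicator_of_mem h, hχCdef, Set.indicator_of_mem h, one_mul]
          · rw [Set.indicator_of_notMem h, hχCdef, Set.indicator_of_notMem h, zero_mul]
      _ = ∫ ω, g ω * χC ω ∂μ := by congr 1; funext ω; ring
      _ = ∫ ω, g ω * q ω ∂μ :=
          int_mul_condexp hG₁0 μ hg_sm hχCint
            (bdd_mul_integrable' hχC_sm.aestronglyMeasurable
              (Filter.Eventually.of_forall hχC01) hg_int)
      _ = ∫ ω, q ω * g ω ∂μ := by congr 1; funext ω; ring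
      _ = ∫ ω, q ω * χS ω ∂μ :=
          (int_mul_condexp hG₁0 μ hq_sm hχSint
            (bdd_mul_integrable' hχS_sm.aestronglyMeasurable
              (Filter.Eventually.of_forall hχS01) integrable_condExp)).symm
      _ = ∫ ω, χS ω * q ω ∂μ := by congr 1; funext ω; ring
      _ = ∫ ω in S, q ω ∂μ := by
          rw [← integral_indicator hS0]
          congr 1; funext ω
          by_cases h : ω ∈ S
          · rw [Set.indicator_of_mem h, hχSdef, Set.indicator_of_mem h, one_mul]
          · rw [Set.indicator_of_notMem h, hχSdef, Set.indicator_of_notMem h, zero_mul]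
  -- the two pushforward measures agree
  have hmeas_eq : (μ.restrict C).map Y' = ν.map Y' := by
    refine Measure.ext_of_Iic _ _ fun y => ?_
    have hS0 : MeasurableSet (Y' ⁻¹' Set.Iic y) := hY'meas measurableSet_Iic
    rw [Measure.map_apply hY'meas measurableSet_Iic, Measure.map_apply hY'meas measurableSet_Iic,
      Measure.restrict_apply hS0, hνdef, withDensity_apply _ hS0]
    have h1 : ∫⁻ ω in Y' ⁻¹' Set.Iic y, ((w ω : ℝ≥0) : ℝ≥0∞) ∂μ
        = ENNReal.ofReal (∫ ω in Y' ⁻¹' Set.Iic y, q ω ∂μ) := by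
      rw [show (fun ω => ((w ω : ℝ≥0) : ℝ≥0∞)) = fun ω => ENNReal.ofReal (q ω) from rfl,
        ← ofReal_integral_eq_lintegral_ofReal integrable_condExp.restrict
        (ae_restrict_of_ae (by filter_upwards [hq01] with ω h; exact h.1))]
    have h2 : μ (Y' ⁻¹' Set.Iic y ∩ C)
        = ENNReal.ofReal (∫ ω in C, (Y' ⁻¹' Set.Iic y).indicator (fun _ => (1:ℝ)) ω ∂μ) := by
      rw [setIntegral_indicator hS0]
      rw [show (∫ _ω in C ∩ Y' ⁻¹' Set.Iic y, (1:ℝ) ∂μ) = (μ (C ∩ Y' ⁻¹' Set.Iic y)).toReal by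
        simp [setIntegral_const, Measure.real]]
      rw [Set.inter_comm, ENNReal.ofReal_toReal (measure_ne_top μ _)]
    rw [h1, h2, hIic y]
  -- conclude
  have e1 : ∫ x, x ∂((μ.restrict C).map Y') = ∫ ω in C, Y' ω ∂μ :=
    integral_map hY'meas.aemeasurable aestronglyMeasurable_id
  have e2 : ∫ x, x ∂(ν.map Y') = ∫ ω, Y' ω ∂ν :=
    integral_map hY'meas.aemeasurable aestronglyMeasurable_id
  have e3 : ∫ ω, Y' ω ∂ν = ∫ ω, (w ω : ℝ) • Y' ω ∂μ := by
    rw [hνdef]; exact integral_withDensity_eq_integral_smul hw_meas Y'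
  have e4 : ∫ ω, (w ω : ℝ) • Y' ω ∂μ = ∫ ω, q ω * Y' ω ∂μ := by
    refine integral_congr_ae ?_
    filter_upwards [hq01] with ω h
    simp only [hwdef, smul_eq_mul, Real.coe_toNNReal _ h.1]
  have e5 : ∫ ω, q ω * Y' ω ∂μ = ∫ ω, q ω * (μ[Y'|G₁]) ω ∂μ :=
    int_mul_condexp hG₁0 μ hq_sm hY'int
      (bdd_mul_integrable hq_sm0.aestronglyMeasurable hq_abs hY'int)
  have e6 : ∫ ω in C, (μ[Y'|G₁]) ω ∂μ = ∫ ω, q ω * (μ[Y'|G₁]) ω ∂μ := by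
    have e6a : ∫ ω in C, (μ[Y'|G₁]) ω ∂μ = ∫ ω, (μ[Y'|G₁]) ω * χC ω ∂μ := by
      rw [← integral_indicator hC0]
      congr 1; funext ω
      by_cases h : ω ∈ C
      · rw [Set.indicator_of_mem h, hχCdef, Set.indicator_of_mem h, mul_one]
      · rw [Set.indicator_of_notMem h, hχCdef, Set.indicator_of_notMem h, mul_zero]
    have e6b : ∫ ω, (μ[Y'|G₁]) ω * χC ω ∂μ = ∫ ω, (μ[Y'|G₁]) ω * q ω ∂μ :=
      int_mul_condexp hG₁0 μ stronglyMeasurable_condExp hχCint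
        (bdd_mul_integrable' hχC_sm.aestronglyMeasurable
          (Filter.Eventually.of_forall hχC01) integrable_condExp)
    rw [e6a, e6b]; congr 1; funext ω; ring
  calc ∫ ω in C, Y' ω ∂μ = ∫ x, x ∂((μ.restrict C).map Y') := e1.symm
    _ = ∫ x, x ∂(ν.map Y') := by rw [hmeas_eq]
    _ = ∫ ω, q ω * (μ[Y'|G₁]) ω ∂μ := by rw [e2, e3, e4, e5]
    _ = ∫ ω in C, (μ[Y'|G₁]) ω ∂μ := e6.symm

/-- KEY identity via π-system induction on `mT ⊔ m₁`. -/
lemma lemKEY {Ω 𝕋 : Type*} (m₁ mT G₁ : MeasurableSpace Ω) [m0 : MeasurableSpace Ω]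
    (hG₁ : G₁ = mT ⊔ m₁) (hm₁0 : m₁ ≤ m0) (hmT0 : mT ≤ m0)
    (μ : Measure Ω) [IsProbabilityMeasure μ] (T : Ω → 𝕋) (t : 𝕋)
    (hpre : ∀ E : Set 𝕋, MeasurableSet[mT] (T ⁻¹' E))
    (hsurj : ∀ A : Set Ω, MeasurableSet[mT] A → ∃ E : Set 𝕋, A = T ⁻¹' E)
    {ind Y' : Ω → ℝ} (hind : ind = Set.indicator {ω | T ω = t} (fun _ => (1 : ℝ)))
    (hY'int : Integrable Y' μ) :
    (fun ω => ind ω * (μ[Y'|G₁]) ω * (μ[ind|m₁]) ω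
      - ind ω * (μ[fun ω' => Y' ω' * ind ω'|m₁]) ω) =ᵐ[μ] fun _ => 0 := by
  classical
  have hG₁0 : G₁ ≤ m0 := hG₁ ▸ sup_le hmT0 hm₁0
  have h1G₁ : m₁ ≤ G₁ := hG₁ ▸ le_sup_right
  have hTG₁ : mT ≤ G₁ := hG₁ ▸ le_sup_left
  have hset : {ω | T ω = t} = T ⁻¹' ({t} : Set 𝕋) := by ext ω; simp
  have hTt_mT : MeasurableSet[mT] {ω | T ω = t} := by rw [hset]; exact hpre {t}
  have hTt0 : MeasurableSet {ω | T ω = t} := hmT0 _ hTt_mT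
  have hind_smT : StronglyMeasurable[mT] ind := by
    rw [hind]; exact stronglyMeasurable_const.indicator hTt_mT
  have hind_sm0 : StronglyMeasurable ind := hind_smT.mono hmT0
  have hind01 : ∀ ω, 0 ≤ ind ω ∧ ind ω ≤ 1 := by
    intro ω; rw [hind]; unfold Set.indicator; split <;> norm_num
  have hind_abs : ∀ ω, |ind ω| ≤ 1 := fun ω =>
    abs_le.2 ⟨by linarith [(hind01 ω).1], (hind01 ω).2⟩
  have hind_int : Integrable ind μ := by
    rw [hind]; exact (integrable_const 1).indicator hTt0
  have hind_zero : ∀ ω, T ω ≠ t → ind ω = 0 := by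
    intro ω h; rw [hind]
    exact Set.indicator_of_notMem (by simpa using h) _
  have hYind_int : Integrable (fun ω => Y' ω * ind ω) μ :=
    bdd_mul_integrable' hind_sm0.aestronglyMeasurable
      (Filter.Eventually.of_forall hind_abs) hY'int
  set c₁ := μ[ind|m₁] with hc₁def
  set n₁ := μ[fun ω' => Y' ω' * ind ω'|m₁] with hn₁def
  set mY := μ[Y'|G₁] with hmYdef
  have hmY_sm : StronglyMeasurable[G₁] mY := stronglyMeasurable_condExp
  have hc₁_sm : StronglyMeasurable[m₁] c₁ := stronglyMeasurable_condExp
  have hn₁_sm : StronglyMeasurable[m₁] n₁ := stronglyMeasurable_condExp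
  have hc₁01 : ∀ᵐ ω ∂μ, 0 ≤ c₁ ω ∧ c₁ ω ≤ 1 := by
    have := condexp_indicator_mem01 m₁ hm₁0 μ hTt0
    rw [hc₁def, hind]; exact this
  have hc₁_abs : ∀ᵐ ω ∂μ, |c₁ ω| ≤ 1 := by
    filter_upwards [hc₁01] with ω h
    exact abs_le.2 ⟨by linarith [h.1], h.2⟩
  set U : Ω → ℝ := fun ω => ind ω * mY ω * c₁ ω - ind ω * n₁ ω with hUdef
  have hindc₁_abs : ∀ᵐ ω ∂μ, |ind ω * c₁ ω| ≤ 1 := by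
    filter_upwards [hc₁_abs] with ω h
    exact abs_mul_le_one' (hind_abs ω) h
  have hU_int : Integrable U μ := by
    have ht1 : Integrable (fun ω => (ind ω * c₁ ω) * mY ω) μ :=
      bdd_mul_integrable (hind_sm0.aestronglyMeasurable.mul
        ((hc₁_sm.mono hm₁0).aestronglyMeasurable)) hindc₁_abs integrable_condExp
    have ht2 : Integrable (fun ω => ind ω * n₁ ω) μ :=
      bdd_mul_integrable hind_sm0.aestronglyMeasurable
        (Filter.Eventually.of_forall hind_abs) integrable_condExp
    refine (ht1.sub ht2).congr (Filter.Eventually.of_forall fun ω => ?_)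
    simp only [hUdef, Pi.sub_apply]; ring
  have hU_sm : StronglyMeasurable[G₁] U :=
    (((hind_smT.mono hTG₁).mul hmY_sm).mul (hc₁_sm.mono h1G₁)).sub
      ((hind_smT.mono hTG₁).mul (hn₁_sm.mono h1G₁))
  -- zero integral on generators
  have hbasic : ∀ (E : Set 𝕋) (B : Set Ω), MeasurableSet[m₁] B →
      ∫ ω in T ⁻¹' E ∩ B, U ω ∂μ = 0 := by
    intro E B hB
    have hB0 : MeasurableSet B := hm₁0 _ hB
    have hA0 : MeasurableSet (T ⁻¹' E ∩ B) := (hmT0 _ (hpre E)).inter hB0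
    set χB := B.indicator (fun _ => (1:ℝ)) with hχBdef
    have hχB_sm₁ : StronglyMeasurable[m₁] χB := stronglyMeasurable_const.indicator hB
    have hχB_sm0 : StronglyMeasurable χB := hχB_sm₁.mono hm₁0
    have hχB01 : ∀ ω, |χB ω| ≤ 1 := by
      intro ω; rw [hχBdef]; unfold Set.indicator; split <;> norm_num
    by_cases htE : t ∈ E
    · have hAind : (T ⁻¹' E ∩ B).indicator U = fun ω => χB ω * U ω := by
        funext ω
        by_cases hq1 : T ω = t
        · have hωE : ω ∈ T ⁻¹' E := by simp only [Set.mem_preimage, hq1]; exact htE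
          by_cases hq2 : ω ∈ B
          · rw [Set.indicator_of_mem (Set.mem_inter hωE hq2), hχBdef, Set.indicator_of_mem hq2, one_mul]
          · rw [Set.indicator_of_notMem (fun hc => hq2 hc.2), hχBdef,
              Set.indicator_of_notMem hq2, zero_mul]
        · have hU0 : U ω = 0 := by simp only [hUdef]; rw [hind_zero ω hq1]; ring
          rw [Set.indicator_apply]
          split <;> simp [hU0]
      rw [← integral_indicator hA0, hAind]
      have hint1 : Integrable (fun ω => χB ω * (ind ω * mY ω * c₁ ω)) μ := by
        refine (bdd_mul_integrable (b := fun ω => χB ω * (ind ω * c₁ ω)) (f := mY)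
          (hχB_sm0.aestronglyMeasurable.mul (hind_sm0.aestronglyMeasurable.mul
            ((hc₁_sm.mono hm₁0).aestronglyMeasurable)))
          (by filter_upwards [hindc₁_abs] with ω h; exact abs_mul_le_one' (hχB01 ω) h)
          integrable_condExp).congr (Filter.Eventually.of_forall fun ω => by ring)
      have hint2 : Integrable (fun ω => χB ω * (ind ω * n₁ ω)) μ := by
        refine (bdd_mul_integrable (b := fun ω => χB ω * ind ω) (f := n₁)
          (hχB_sm0.aestronglyMeasurable.mul hind_sm0.aestronglyMeasurable)
          (Filter.Eventually.of_forall fun ω => abs_mul_le_one' (hχB01 ω) (hind_abs ω))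
          integrable_condExp).congr (Filter.Eventually.of_forall fun ω => by ring)
      have hsub : ∫ ω, χB ω * U ω ∂μ
          = (∫ ω, χB ω * (ind ω * mY ω * c₁ ω) ∂μ) - ∫ ω, χB ω * (ind ω * n₁ ω) ∂μ := by
        rw [← integral_sub hint1 hint2]
        congr 1; funext ω; simp only [hUdef]; ring
      have hterm1 : ∫ ω, χB ω * (ind ω * mY ω * c₁ ω) ∂μ
          = ∫ ω, (χB ω * c₁ ω) * n₁ ω ∂μ := by
        have e1 : ∫ ω, (χB ω * ind ω * c₁ ω) * Y' ω ∂μ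
            = ∫ ω, (χB ω * ind ω * c₁ ω) * mY ω ∂μ :=
          int_mul_condexp hG₁0 μ
            (((hχB_sm₁.mono h1G₁).mul (hind_smT.mono hTG₁)).mul (hc₁_sm.mono h1G₁))
            hY'int
            (bdd_mul_integrable ((hχB_sm0.aestronglyMeasurable.mul
              hind_sm0.aestronglyMeasurable).mul ((hc₁_sm.mono hm₁0).aestronglyMeasurable))
              (by filter_upwards [hc₁_abs] with ω h;
                  exact abs_mul_le_one' (abs_mul_le_one' (hχB01 ω) (hind_abs ω)) h)
              hY'int)
        have e2 : ∫ ω, (χB ω * c₁ ω) * (Y' ω * ind ω) ∂μ = ∫ ω, (χB ω * c₁ ω) * n₁ ω ∂μ :=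
          int_mul_condexp hm₁0 μ (hχB_sm₁.mul hc₁_sm) hYind_int
            (bdd_mul_integrable (hχB_sm0.aestronglyMeasurable.mul
              ((hc₁_sm.mono hm₁0).aestronglyMeasurable))
              (by filter_upwards [hc₁_abs] with ω h; exact abs_mul_le_one' (hχB01 ω) h)
              hYind_int)
        calc ∫ ω, χB ω * (ind ω * mY ω * c₁ ω) ∂μ
            = ∫ ω, (χB ω * ind ω * c₁ ω) * mY ω ∂μ := by congr 1; funext ω; ring
          _ = ∫ ω, (χB ω * ind ω * c₁ ω) * Y' ω ∂μ := e1.symm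
          _ = ∫ ω, (χB ω * c₁ ω) * (Y' ω * ind ω) ∂μ := by congr 1; funext ω; ring
          _ = ∫ ω, (χB ω * c₁ ω) * n₁ ω ∂μ := e2
      have hterm2 : ∫ ω, χB ω * (ind ω * n₁ ω) ∂μ = ∫ ω, (χB ω * c₁ ω) * n₁ ω ∂μ := by
        have e3 : ∫ ω, (χB ω * n₁ ω) * ind ω ∂μ = ∫ ω, (χB ω * n₁ ω) * c₁ ω ∂μ :=
          int_mul_condexp hm₁0 μ (hχB_sm₁.mul hn₁_sm) hind_int
            ((bdd_mul_integrable hχB_sm0.aestronglyMeasurable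
              (Filter.Eventually.of_forall hχB01)
              (bdd_mul_integrable hind_sm0.aestronglyMeasurable
                (Filter.Eventually.of_forall hind_abs) integrable_condExp)).congr
              (Filter.Eventually.of_forall fun ω => by ring))
        calc ∫ ω, χB ω * (ind ω * n₁ ω) ∂μ
            = ∫ ω, (χB ω * n₁ ω) * ind ω ∂μ := by congr 1; funext ω; ring
          _ = ∫ ω, (χB ω * n₁ ω) * c₁ ω ∂μ := e3
          _ = ∫ ω, (χB ω * c₁ ω) * n₁ ω ∂μ := by congr 1; funext ω; ring
      rw [hsub, hterm1, hterm2, sub_self]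
    · have hzero : (T ⁻¹' E ∩ B).indicator U = fun _ => (0:ℝ) := by
        funext ω
        rw [Set.indicator_apply]
        split
        · next hω =>
            have hne : T ω ≠ t := fun hc => htE (hc ▸ hω.1)
            simp only [hUdef]; rw [hind_zero ω hne]; ring
        · rfl
      rw [← integral_indicator hA0, hzero, integral_zero]
  -- generation of G₁ by the π-system
  have hgen : G₁ = MeasurableSpace.generateFrom
      {A | ∃ (E : Set 𝕋) (B : Set Ω), MeasurableSet[m₁] B ∧ A = T ⁻¹' E ∩ B} := by
    rw [hG₁]
    apply le_antisymm
    · apply sup_le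
      · intro A hA
        obtain ⟨E, rfl⟩ := hsurj A hA
        exact MeasurableSpace.measurableSet_generateFrom ⟨E, Set.univ, MeasurableSet.univ,
          by simp⟩
      · intro A hA
        exact MeasurableSpace.measurableSet_generateFrom ⟨Set.univ, A, hA, by simp⟩
    · refine MeasurableSpace.generateFrom_le ?_
      rintro A ⟨E, B, hB, rfl⟩
      exact MeasurableSet.inter ((le_sup_left : mT ≤ mT ⊔ m₁) _ (hpre E))
        ((le_sup_right : m₁ ≤ mT ⊔ m₁) _ hB)
  have hpi : IsPiSystem
      {A | ∃ (E : Set 𝕋) (B : Set Ω), MeasurableSet[m₁] B ∧ A = T ⁻¹' E ∩ B} := by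
    rintro A₁ ⟨E₁, B₁, hB₁, rfl⟩ A₂ ⟨E₂, B₂, hB₂, rfl⟩ _
    refine ⟨E₁ ∩ E₂, B₁ ∩ B₂, hB₁.inter hB₂, ?_⟩
    rw [Set.preimage_inter]; ext ω
    simp only [Set.mem_inter_iff, Set.mem_preimage]; tauto
  have huniv : ∫ ω, U ω ∂μ = 0 := by
    have h := hbasic Set.univ Set.univ MeasurableSet.univ
    rw [Set.preimage_univ, Set.univ_inter, Measure.restrict_univ] at h
    exact h
  have hKEYint : ∀ s : Set Ω, MeasurableSet[G₁] s → ∫ ω in s, U ω ∂μ = 0 := by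
    intro s hs
    refine MeasurableSpace.induction_on_inter (m := G₁) (C := fun A _ => ∫ ω in A, U ω ∂μ = 0) hgen hpi ?_ ?_ ?_ ?_ s hs
    · simp
    · rintro A ⟨E, B, hB, rfl⟩; exact hbasic E B hB
    · intro A hA hint
      have h0 : MeasurableSet A := hG₁0 _ hA
      have hcompl := integral_add_compl h0 hU_int
      rw [hint] at hcompl
      rw [← huniv, ← hcompl]; ring
    · intro f hdisj hmeas hint
      rw [integral_iUnion (fun i => hG₁0 _ (hmeas i)) hdisj hU_int.integrableOn]
      simp [hint]
  have h := ae_eq_condExp_of_forall_setIntegral_eq hG₁0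
    (integrable_zero Ω ℝ μ) (fun s _ _ => hU_int.integrableOn)
    (fun s hs _ => by rw [hKEYint s hs]; simp) hU_sm.aestronglyMeasurable
  refine h.trans (Filter.EventuallyEq.of_eq ?_)
  exact condExp_zero

/-- v·E[ind|m₂] is a version of E[Y'·ind|m₂]. -/
lemma lemMAIN {Ω : Type*} (m₂ G₁ G₂ : MeasurableSpace Ω) [m0 : MeasurableSpace Ω]
    (h20 : m₂ ≤ m0) (h2G₂ : m₂ ≤ G₂) (hG₂0 : G₂ ≤ m0) (hG₁0 : G₁ ≤ m0)
    (μ : Measure Ω) [IsProbabilityMeasure μ]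
    {ind Y' v : Ω → ℝ} {Tset : Set Ω} (hTset0 : MeasurableSet Tset)
    (hTsetG₂ : MeasurableSet[G₂] Tset)
    (hind : ind = Set.indicator Tset (fun _ => (1:ℝ)))
    (hY'int : Integrable Y' μ)
    (hv : StronglyMeasurable[m₂] v)
    (hvind : (fun ω => v ω * ind ω) =ᵐ[μ] fun ω => ind ω * (μ[Y'|G₁]) ω)
    (hSA : ∀ C : Set Ω, MeasurableSet[G₂] C →
      ∫ ω in C, Y' ω ∂μ = ∫ ω in C, (μ[Y'|G₁]) ω ∂μ) :
    (fun ω => v ω * (μ[ind|m₂]) ω) =ᵐ[μ] μ[fun ω => Y' ω * ind ω|m₂] := by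
  have hind_sm0 : StronglyMeasurable ind := by
    rw [hind]; exact stronglyMeasurable_const.indicator hTset0
  have hind01 : ∀ ω, 0 ≤ ind ω ∧ ind ω ≤ 1 := by
    intro ω; rw [hind]; unfold Set.indicator; split <;> norm_num
  have hind_abs : ∀ ω, |ind ω| ≤ 1 := fun ω =>
    abs_le.2 ⟨by linarith [(hind01 ω).1], (hind01 ω).2⟩
  have hind_int : Integrable ind μ := by
    rw [hind]; exact (integrable_const 1).indicator hTset0
  have hmul_ind : ∀ h : Ω → ℝ, (fun ω => ind ω * h ω) = Set.indicator Tset h := by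
    intro h; funext ω
    by_cases hω : ω ∈ Tset
    · rw [hind, Set.indicator_of_mem hω, Set.indicator_of_mem hω, one_mul]
    · rw [hind, Set.indicator_of_notMem hω, Set.indicator_of_notMem hω, zero_mul]
  have hYind_int : Integrable (fun ω => Y' ω * ind ω) μ :=
    bdd_mul_integrable' hind_sm0.aestronglyMeasurable
      (Filter.Eventually.of_forall hind_abs) hY'int
  have hvind_int : Integrable (fun ω => v ω * ind ω) μ := by
    refine Integrable.congr ?_ hvind.symm
    exact bdd_mul_integrable hind_sm0.aestronglyMeasurable
      (Filter.Eventually.of_forall hind_abs) integrable_condExp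
  have hpull₂ : μ[fun ω => v ω * ind ω|m₂] =ᵐ[μ] fun ω => v ω * (μ[ind|m₂]) ω :=
    condExp_mul_of_stronglyMeasurable_left hv (show Integrable (v * ind) μ from hvind_int) hind_int
  have hvc₂_int : Integrable (fun ω => v ω * (μ[ind|m₂]) ω) μ :=
    integrable_condExp.congr hpull₂
  have heq : ∀ s : Set Ω, MeasurableSet[m₂] s → μ s < ⊤ →
      ∫ ω in s, v ω * (μ[ind|m₂]) ω ∂μ = ∫ ω in s, Y' ω * ind ω ∂μ := by
    intro s hs _
    have hsG₂ : MeasurableSet[G₂] (s ∩ Tset) :=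
      MeasurableSet.inter (h2G₂ _ hs) hTsetG₂
    calc ∫ ω in s, v ω * (μ[ind|m₂]) ω ∂μ
        = ∫ ω in s, (μ[fun ω => v ω * ind ω|m₂]) ω ∂μ :=
          integral_congr_ae (ae_restrict_of_ae hpull₂.symm)
      _ = ∫ ω in s, v ω * ind ω ∂μ := setIntegral_condExp h20 hvind_int hs
      _ = ∫ ω in s, ind ω * (μ[Y'|G₁]) ω ∂μ := integral_congr_ae (ae_restrict_of_ae hvind)
      _ = ∫ ω in s, Set.indicator Tset (μ[Y'|G₁]) ω ∂μ := by rw [← hmul_ind (μ[Y'|G₁])]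
      _ = ∫ ω in s ∩ Tset, (μ[Y'|G₁]) ω ∂μ := setIntegral_indicator hTset0
      _ = ∫ ω in s ∩ Tset, Y' ω ∂μ := (hSA _ hsG₂).symm
      _ = ∫ ω in s, Set.indicator Tset Y' ω ∂μ := (setIntegral_indicator hTset0).symm
      _ = ∫ ω in s, ind ω * Y' ω ∂μ := by rw [← hmul_ind Y']
      _ = ∫ ω in s, Y' ω * ind ω ∂μ := by congr 1; funext ω; ring
  exact ae_eq_condExp_of_forall_setIntegral_eq h20 hYind_int
    (fun s _ _ => hvc₂_int.integrableOn) heq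
    ((hv.mul stronglyMeasurable_condExp).aestronglyMeasurable)

/-- If `Y ⊥⊥ Z₂ | T, Z₁` (in the sense of a.s. equality of conditional CDFs given
`σ(T) ⊔ Z₂` and `σ(T) ⊔ Z₁`) and `Z₁ ⊆ Z₂`, then the outcome regressions agree:
`b_t(Z₁) = b_t(Z₂)` a.s., and hence `E[b_t(Z₁)] = E[b_t(Z₂)]`, where
`b_t(Z) := E[Y · 1{T=t} | Z] / P(T = t | Z)`. -/
theorem stmt_2 {Ω 𝕋 : Type*} (m₁ m₂ : MeasurableSpace Ω) (mT : MeasurableSpace Ω) [m0 : MeasurableSpace Ω]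
    [MeasurableSpace 𝕋] [Fintype 𝕋] [MeasurableSingletonClass 𝕋]
    (μ : Measure Ω) [IsProbabilityMeasure μ]
    (h12 : m₁ ≤ m₂) (h2 : m₂ ≤ m0)
    (T : Ω → 𝕋) (hT : Measurable T) (Y : Ω → ℝ) (hY : MemLp Y 2 μ)
    (hmT : mT = MeasurableSpace.comap T inferInstance)
    (hci : ∀ y : ℝ,
      (μ[Set.indicator {ω | Y ω ≤ y} (fun _ => (1 : ℝ)) | mT ⊔ m₂])
        =ᵐ[μ] (μ[Set.indicator {ω | Y ω ≤ y} (fun _ => (1 : ℝ)) | mT ⊔ m₁]))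
    (t : 𝕋)
    (ind : Ω → ℝ) (hind : ind = Set.indicator {ω | T ω = t} (fun _ => (1 : ℝ)))
    (hpos₁ : ∀ᵐ ω ∂μ, 0 < (μ[ind | m₁]) ω ∧ (μ[ind | m₁]) ω < 1)
    (hpos₂ : ∀ᵐ ω ∂μ, 0 < (μ[ind | m₂]) ω ∧ (μ[ind | m₂]) ω < 1) :
    ((fun ω => (μ[fun ω' => Y ω' * ind ω' | m₁]) ω / (μ[ind | m₁]) ω)
      =ᵐ[μ] fun ω => (μ[fun ω' => Y ω' * ind ω' | m₂]) ω / (μ[ind | m₂]) ω) ∧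
    (∫ ω, (μ[fun ω' => Y ω' * ind ω' | m₁]) ω / (μ[ind | m₁]) ω ∂μ
      = ∫ ω, (μ[fun ω' => Y ω' * ind ω' | m₂]) ω / (μ[ind | m₂]) ω ∂μ) := by
  have hmT0 : mT ≤ m0 := by rw [hmT]; exact hT.comap_le
  have hm₁0 : m₁ ≤ m0 := h12.trans h2
  have hpre : ∀ E : Set 𝕋, MeasurableSet[mT] (T ⁻¹' E) := by
    intro E; rw [hmT]; exact ⟨E, (Set.to_countable E).measurableSet, rfl⟩
  have hsurj : ∀ A : Set Ω, MeasurableSet[mT] A → ∃ E : Set 𝕋, A = T ⁻¹' E := by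
    intro A hA; rw [hmT] at hA
    obtain ⟨E, -, hEq⟩ := hA
    exact ⟨E, hEq.symm⟩
  have hset : {ω | T ω = t} = T ⁻¹' ({t} : Set 𝕋) := by ext ω; simp
  have hTt0 : MeasurableSet[m0] {ω | T ω = t} := by
    rw [hset]; exact hmT0 _ (hpre {t})
  have hTtG₂ : MeasurableSet[mT ⊔ m₂] {ω | T ω = t} := by
    rw [hset]; exact (le_sup_left : mT ≤ mT ⊔ m₂) _ (hpre {t})
  -- measurable version of Y
  have hY'sm : StronglyMeasurable[m0] (hY.1.mk Y) := hY.1.stronglyMeasurable_mk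
  have hYY' : Y =ᵐ[μ] hY.1.mk Y := hY.1.ae_eq_mk
  set Y' := hY.1.mk Y with hY'def
  have hYint : Integrable Y μ := hY.integrable one_le_two
  have hY'int : Integrable Y' μ := hYint.congr hYY'
  -- transfer conditional independence to Y'
  have hciY' : ∀ y : ℝ, (μ[(Y' ⁻¹' Set.Iic y).indicator (fun _ => (1:ℝ))|mT ⊔ m₂])
      =ᵐ[μ] (μ[(Y' ⁻¹' Set.Iic y).indicator (fun _ => (1:ℝ))|mT ⊔ m₁]) := by
    intro y
    have hae : (Y' ⁻¹' Set.Iic y).indicator (fun _ => (1:ℝ))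
        =ᵐ[μ] Set.indicator {ω | Y ω ≤ y} (fun _ => (1:ℝ)) := by
      filter_upwards [hYY'] with ω h
      by_cases hy : Y' ω ≤ y
      · rw [Set.indicator_of_mem (by simpa using hy), Set.indicator_of_mem (by simp [h, hy])]
      · rw [Set.indicator_of_notMem (by simpa using hy),
          Set.indicator_of_notMem (by simp [h, hy])]
    exact (condExp_congr_ae hae).trans ((hci y).trans (condExp_congr_ae hae.symm))
  have hSA : ∀ C : Set Ω, MeasurableSet[mT ⊔ m₂] C →
      ∫ ω in C, Y' ω ∂μ = ∫ ω in C, (μ[Y'|mT ⊔ m₁]) ω ∂μ :=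
    fun C hC => lemSA (m0 := m0) (mT ⊔ m₁) (mT ⊔ m₂) (sup_le hmT0 hm₁0) (sup_le hmT0 h2) μ
      hY'sm hY'int hciY' hC
  -- KEY identity and definition of v
  have hKEY := lemKEY (m0 := m0) m₁ mT (mT ⊔ m₁) rfl hm₁0 hmT0 μ T t hpre hsurj hind hY'int
  set v : Ω → ℝ := fun ω => (μ[fun ω' => Y' ω' * ind ω'|m₁]) ω / (μ[ind|m₁]) ω with hvdef
  have hvind : (fun ω => v ω * ind ω) =ᵐ[μ] fun ω => ind ω * (μ[Y'|mT ⊔ m₁]) ω := by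
    filter_upwards [hKEY, hpos₁] with ω hU hp
    have hne : (μ[ind|m₁]) ω ≠ 0 := ne_of_gt hp.1
    have hU' : ind ω * (μ[fun ω' => Y' ω' * ind ω'|m₁]) ω
        = ind ω * (μ[Y'|mT ⊔ m₁]) ω * (μ[ind|m₁]) ω := by
      have h0 : ind ω * (μ[Y'|mT ⊔ m₁]) ω * (μ[ind|m₁]) ω
          - ind ω * (μ[fun ω' => Y' ω' * ind ω'|m₁]) ω = 0 := hU
      linarith [h0]
    have hv : v ω * ind ω
        = ind ω * (μ[fun ω' => Y' ω' * ind ω'|m₁]) ω / (μ[ind|m₁]) ω := by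
      simp only [hvdef]; ring
    rw [hv, hU', mul_div_cancel_right₀ _ hne]
  have hv_sm₂ : StronglyMeasurable[m₂] v :=
    ((stronglyMeasurable_condExp.mono h12).measurable.div
      (stronglyMeasurable_condExp.mono h12).measurable).stronglyMeasurable
  have hv_sm₁ : StronglyMeasurable[m₁] v :=
    (stronglyMeasurable_condExp.measurable.div
      stronglyMeasurable_condExp.measurable).stronglyMeasurable
  -- the two claims
  have hClaim₂ : (fun ω => v ω * (μ[ind|m₂]) ω) =ᵐ[μ] μ[fun ω => Y' ω * ind ω|m₂] :=
    lemMAIN (m0 := m0) m₂ (mT ⊔ m₁) (mT ⊔ m₂) h2 le_sup_right (sup_le hmT0 h2) (sup_le hmT0 hm₁0) μ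
      hTt0 hTtG₂ hind hY'int hv_sm₂ hvind hSA
  have hClaim₁ : (fun ω => v ω * (μ[ind|m₁]) ω) =ᵐ[μ] μ[fun ω => Y' ω * ind ω|m₁] :=
    lemMAIN (m0 := m0) m₁ (mT ⊔ m₁) (mT ⊔ m₂) hm₁0 (h12.trans le_sup_right) (sup_le hmT0 h2)
      (sup_le hmT0 hm₁0) μ hTt0 hTtG₂ hind hY'int hv_sm₁ hvind hSA
  -- final assembly
  have hcongr₁ : μ[fun ω' => Y ω' * ind ω'|m₁] =ᵐ[μ] μ[fun ω' => Y' ω' * ind ω'|m₁] :=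
    condExp_congr_ae (by filter_upwards [hYY'] with ω h; rw [h])
  have hcongr₂ : μ[fun ω' => Y ω' * ind ω'|m₂] =ᵐ[μ] μ[fun ω' => Y' ω' * ind ω'|m₂] :=
    condExp_congr_ae (by filter_upwards [hYY'] with ω h; rw [h])
  have goal1 : (fun ω => (μ[fun ω' => Y ω' * ind ω' | m₁]) ω / (μ[ind | m₁]) ω)
      =ᵐ[μ] fun ω => (μ[fun ω' => Y ω' * ind ω' | m₂]) ω / (μ[ind | m₂]) ω := by
    filter_upwards [hcongr₁, hcongr₂, hClaim₁, hClaim₂, hpos₁, hpos₂]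
      with ω ha hb hc1 hc2 hp1 hp2
    have hne1 : (μ[ind|m₁]) ω ≠ 0 := ne_of_gt hp1.1
    have hne2 : (μ[ind|m₂]) ω ≠ 0 := ne_of_gt hp2.1
    rw [ha, hb, ← hc1, ← hc2, mul_div_cancel_right₀ _ hne1, mul_div_cancel_right₀ _ hne2]
  exact ⟨goal1, integral_congr_ae goal1⟩
end

section
/- Let W be a random variable with values in [δ, 1−δ] for some 0 < δ < 1/2, whose distribution is symmetric in the sense W =ᵈ 1−W, and let T ∈ {0,1} with P(T = 1 | W) = W. Set Z := |W − 1/2|. Then P(T = 1 | Z) = 1/2 almost surely, and consequently T is independent of Z. -/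
open MeasureTheory ProbabilityTheory

/-!
Since `|w - 1/2|` is invariant under `w ↦ 1 - w`, so is every event `{Z ∈ t}`, and the symmetry
`W =ᵈ 1 - W` gives `E[W; Z ∈ t] = E[1 - W; Z ∈ t]`, i.e. `E[W | Z] = 1/2`. By the tower property
`P(T = 1 | Z) = E[P(T = 1 | W) | Z] = E[W | Z] = 1/2`, and an event whose conditional probability
given a σ-algebra is constant is independent of it.
-/

theorem setIntegral_id_eq_half_measureReal {ν : Measure ℝ} [IsFiniteMeasure ν]
    (hν : ν.map (fun w => 1 - w) = ν) (hint : Integrable id ν) {S : Set ℝ}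
    (hS : MeasurableSet S) (hSsymm : (fun w => 1 - w) ⁻¹' S = S) :
    ∫ w in S, w ∂ν = ν.real S / 2 := by
  have hreflect : ∫ w in S, w ∂ν = ∫ w in S, (1 - w) ∂ν := by
    conv_lhs => rw [← hν]
    rw [setIntegral_map (f := fun w => w) hS aestronglyMeasurable_id
      (measurable_const_sub 1).aemeasurable, hSsymm]
  have hcompl : ∫ w in S, (1 - w) ∂ν = ν.real S - ∫ w in S, w ∂ν := by
    rw [integral_sub (integrable_const (1 : ℝ)).integrableOn (g := fun w => w) hint.integrableOn,
      setIntegral_const, smul_eq_mul, mul_one]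
  linarith

theorem condExp_comap_abs_sub_half_ae_eq_half {Ω : Type*} [MeasurableSpace Ω] {μ : Measure Ω}
    [IsFiniteMeasure μ] {W : Ω → ℝ} (hW : Measurable W) (hint : Integrable W μ)
    (hsym : μ.map W = μ.map (fun ω => 1 - W ω)) :
    μ[W | MeasurableSpace.comap (fun ω => |W ω - 1 / 2|) inferInstance] =ᵐ[μ]
      fun _ => (1 / 2 : ℝ) := by
  set h : ℝ → ℝ := fun w => |w - 1 / 2|
  have hh : Measurable h := (measurable_id.sub_const _).abs
  have hν : (μ.map W).map (fun w => 1 - w) = μ.map W := by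
    rw [Measure.map_map (measurable_const_sub 1) hW, hsym]
    rfl
  have hνint : Integrable id (μ.map W) :=
    (integrable_map_measure aestronglyMeasurable_id hW.aemeasurable).2 hint
  refine (ae_eq_condExp_of_forall_setIntegral_eq (hh.comp hW).comap_le hint
    (fun _ _ _ => integrableOn_const) ?_ aestronglyMeasurable_const).symm
  rintro _ ⟨t, ht, rfl⟩ -
  have hS : MeasurableSet (h ⁻¹' t) := hh ht
  have hSsymm : (fun w => 1 - w) ⁻¹' (h ⁻¹' t) = h ⁻¹' t := by
    ext w
    simp only [Set.mem_preimage, h]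
    rw [show (1 : ℝ) - w - 1 / 2 = -(w - 1 / 2) by ring, abs_neg]
  change ∫ _ in W ⁻¹' (h ⁻¹' t), (1 / 2 : ℝ) ∂μ = ∫ ω in W ⁻¹' (h ⁻¹' t), W ω ∂μ
  rw [← setIntegral_map (f := fun w => w) hS aestronglyMeasurable_id hW.aemeasurable,
    setIntegral_id_eq_half_measureReal hν hνint hS hSsymm, map_measureReal_apply hW hS,
    setIntegral_const, smul_eq_mul]
  ring

theorem indep_generateFrom_singleton_of_condExp_indicator_ae_eq_const {Ω : Type*}
    {m m0 : MeasurableSpace Ω} {μ : Measure Ω} [IsProbabilityMeasure μ] (hm : m ≤ m0)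
    {E : Set Ω} (hE : MeasurableSet E) {c : ℝ}
    (hc : μ[E.indicator (fun _ => (1 : ℝ)) | m] =ᵐ[μ] fun _ => c) :
    Indep (MeasurableSpace.generateFrom {E}) m μ := by
  have hinter : ∀ A, MeasurableSet[m] A → μ.real (E ∩ A) = c * μ.real A := fun A hA =>
    calc μ.real (E ∩ A) = ∫ ω in A, E.indicator (fun _ => (1 : ℝ)) ω ∂μ := by
          rw [setIntegral_indicator hE, setIntegral_const, smul_eq_mul, mul_one,
            Set.inter_comm]
      _ = ∫ ω in A, (μ[E.indicator (fun _ => (1 : ℝ)) | m]) ω ∂μ :=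
          (setIntegral_condExp hm ((integrable_const _).indicator hE) hA).symm
      _ = ∫ _ in A, c ∂μ := setIntegral_congr_ae (hm A hA) (hc.mono fun _ hx _ => hx)
      _ = c * μ.real A := by rw [setIntegral_const, smul_eq_mul, mul_comm]
  have hEc : μ.real E = c := by simpa using hinter Set.univ MeasurableSet.univ
  refine IndepSets.indep (MeasurableSpace.generateFrom_le (by simpa using hE)) hm
    (IsPiSystem.singleton E) (@MeasurableSpace.isPiSystem_measurableSet Ω m) rfl
    (@MeasurableSpace.generateFrom_measurableSet Ω m).symm ?_
  rw [IndepSets_iff]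
  rintro _ A rfl hA
  rw [← ofReal_measureReal, ← ofReal_measureReal, ← ofReal_measureReal, hinter A hA, hEc,
    ENNReal.ofReal_mul (by rw [← hEc]; exact measureReal_nonneg)]

theorem stmt_8_general {Ω : Type*} [m0 : MeasurableSpace Ω]
    (μ : Measure Ω) [IsProbabilityMeasure μ]
    (W T Z : Ω → ℝ) (hW : Measurable W) (hT : Measurable T)
    (hsym : Measure.map W μ = Measure.map (fun ω => 1 - W ω) μ)
    (hTbin : ∀ ω, T ω = 0 ∨ T ω = 1)
    (hprop : (μ[Set.indicator {ω | T ω = 1} (fun _ => (1 : ℝ))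
        | MeasurableSpace.comap W inferInstance]) =ᵐ[μ] W)
    (hZ : Z = fun ω => |W ω - 1 / 2|) :
    ((μ[Set.indicator {ω | T ω = 1} (fun _ => (1 : ℝ))
        | MeasurableSpace.comap Z inferInstance]) =ᵐ[μ] fun _ => (1 / 2 : ℝ)) ∧
    IndepFun T Z μ := by
  subst hZ
  have hE : MeasurableSet {ω | T ω = 1} := hT (measurableSet_singleton 1)
  have hZW : MeasurableSpace.comap (fun ω => |W ω - 1 / 2|) inferInstance ≤
      MeasurableSpace.comap W inferInstance :=
    ((measurable_id.sub_const _).abs.comp (comap_measurable W)).comap_le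
  have hcond : μ[{ω | T ω = 1}.indicator (fun _ => (1 : ℝ))
      | MeasurableSpace.comap (fun ω => |W ω - 1 / 2|) inferInstance] =ᵐ[μ] fun _ => 1 / 2 :=
    (condExp_condExp_of_le hZW hW.comap_le).symm.trans <| (condExp_congr_ae hprop).trans <|
      condExp_comap_abs_sub_half_ae_eq_half hW (integrable_condExp.congr hprop) hsym
  refine ⟨hcond, ?_⟩
  have hT_eq : {ω | T ω = 1}.indicator (fun _ => (1 : ℝ)) = T :=
    funext fun ω => by rcases hTbin ω with h | h <;> simp [h]
  rw [← hT_eq]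
  exact (indep_generateFrom_singleton_of_condExp_indicator_ae_eq_const
    (hZW.trans hW.comap_le) hE hcond).indicator_indepFun 1
    (MeasurableSpace.measurableSet_generateFrom (Set.mem_singleton _))

/-- Symmetric example: `W ∈ [δ, 1−δ]` with `W =ᵈ 1−W`, `T ∈ {0,1}` with `P(T=1|W) = W`,
and `Z := |W − 1/2|`. Then `P(T=1|Z) = 1/2` a.s., and `T` is independent of `Z`. -/
theorem stmt_8 {Ω : Type*} [m0 : MeasurableSpace Ω]
    (μ : Measure Ω) [IsProbabilityMeasure μ]
    (δ : ℝ) (hδ0 : 0 < δ) (hδ : δ < 1 / 2)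
    (W T Z : Ω → ℝ) (hW : Measurable W) (hT : Measurable T)
    (hWrange : ∀ ω, W ω ∈ Set.Icc δ (1 - δ))
    (hsym : Measure.map W μ = Measure.map (fun ω => 1 - W ω) μ)
    (hTbin : ∀ ω, T ω = 0 ∨ T ω = 1)
    (hprop : (μ[Set.indicator {ω | T ω = 1} (fun _ => (1 : ℝ))
        | MeasurableSpace.comap W inferInstance]) =ᵐ[μ] W)
    (hZ : Z = fun ω => |W ω - 1 / 2|) :
    ((μ[Set.indicator {ω | T ω = 1} (fun _ => (1 : ℝ))
        | MeasurableSpace.comap Z inferInstance]) =ᵐ[μ] fun _ => (1 / 2 : ℝ)) ∧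
    IndepFun T Z μ :=
  stmt_8_general (m0 := m0) μ W T Z hW hT hsym hTbin hprop hZ
end
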